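/- Let A ~ Binom(N, 1-q), B ~ Binom(N, 1/2), C ~ Binom(N, 1-q) be mutually independent and define G(q) = -h(1-q)^N + (1-h)·Σ_{k=0}^{N} P(A=k)·(P(B<k) + (1/2)P(B=k) - 2^{-N}(P(C>k) + (1/2)P(C=k))). Then G'(0) = hN - (1-h)·N(N+1)·2^{-(N+1)}. In particular G'(0) > 0 if and only if h > (N+1)/(2^{N+1}+N+1). -/

import Mathlib

/-- The probability mass function of a binomial random variable with `n` trials
and success probability `p`, evaluated at `k`. -/
noncomputable def binomPMF (n : ℕ) (p : ℝ) (k : ℕ) : ℝ :=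
  (n.choose k : ℝ) * p ^ k * (1 - p) ^ (n - k)

/-- The principal's expected payoff in the model with a general red herring:
A, C ~ Binom(N,1-q), B ~ Binom(N,1/2) independent, and
G(q) = -h(1-q)^N + (1-h) Σ_k P(A=k)(P(B<k) + (1/2)P(B=k)
  - 2^{-N}(P(C>k) + (1/2)P(C=k))). -/
noncomputable def G (N : ℕ) (h q : ℝ) : ℝ :=
  -h * (1-q) ^ N
    + (1-h) * ∑ k ∈ Finset.range (N+1), binomPMF N (1-q) k *
        ((∑ j ∈ Finset.range k, binomPMF N (1/2) j) + (1/2) * binomPMF N (1/2) k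
          - ((2:ℝ)^(N:ℕ))⁻¹ * ((∑ j ∈ Finset.Ioc k N, binomPMF N (1-q) j)
              + (1/2) * binomPMF N (1-q) k))

/-!
Since `A` and `C` are i.i.d., `P(C > A) + P(C = A) / 2 = 1 / 2` (expand `(Σ_k P(A = k))² = 1`),
so the `2^{-N}` term of `G` is the constant `2^{-(N+1)}` and
`G(q) = -h (1-q)^N + (1-h) (E[M(A)] - 2^{-(N+1)})` with `M(k) = P(B < k) + P(B = k) / 2`.
At `q = 0` the variable `A` sits at `N`, and to first order only the masses at `N` and `N - 1`
move, at rates `-N` and `N`. Hence `G'(0) = hN - (1-h) N (M(N) - M(N-1))`, and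
`M(N) - M(N-1) = (P(B = N-1) + P(B = N)) / 2 = (N+1) / 2^{N+1}`.
-/

open Finset

lemma sum_mul_sum_Ioc_add_half_mul_eq_sq_div_two {K : Type*} [Field K] [NeZero (2 : K)]
    (f : ℕ → K) (n : ℕ) :
    ∑ k ∈ range (n + 1), f k * (∑ j ∈ Ioc k n, f j + 1 / 2 * f k) =
      (∑ k ∈ range (n + 1), f k) ^ 2 / 2 := by
  induction n with
  | zero =>
    simp only [zero_add, range_one, Ioc_self, sum_empty, sum_singleton]
    ring
  | succ n ih =>
    have hIoc : ∀ k ∈ range (n + 1),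
        ∑ j ∈ Ioc k (n + 1), f j = ∑ j ∈ Ioc k n, f j + f (n + 1) := fun k hk =>
      sum_Ioc_succ_top (Nat.lt_succ_iff.mp (mem_range.mp hk)) f
    rw [sum_range_succ, sum_congr rfl fun k hk => by rw [hIoc k hk], sum_range_succ (n := n + 1)]
    simp only [Ioc_self, sum_empty, mul_add, sum_add_distrib, ← sum_mul] at ih ⊢
    field_simp at ih ⊢
    linear_combination ih

lemma sum_binomPMF (n : ℕ) (p : ℝ) : ∑ k ∈ range (n + 1), binomPMF n p k = 1 := by
  have h := add_pow p (1 - p) n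
  rw [add_sub_cancel, one_pow] at h
  rw [h]
  exact sum_congr rfl fun k _ => by rw [binomPMF]; ring

lemma binomPMF_half (n k : ℕ) : binomPMF n (1 / 2) k = n.choose k / 2 ^ n := by
  rcases le_or_gt k n with hk | hk
  · rw [binomPMF, show (1 : ℝ) - 1 / 2 = 1 / 2 by norm_num, mul_assoc, ← pow_add,
      Nat.add_sub_cancel' hk, one_div_pow, mul_one_div]
  · simp [binomPMF, Nat.choose_eq_zero_of_lt hk]

lemma hasDerivAt_one_sub_pow_mul_pow (k m : ℕ) :
    HasDerivAt (fun q : ℝ => (1 - q) ^ k * q ^ m)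
      (if m = 0 then -(k : ℝ) else if m = 1 then 1 else 0) 0 := by
  refine ((((hasDerivAt_id' (x := (0 : ℝ))).const_sub 1).fun_pow k).fun_mul
    ((hasDerivAt_id' (x := (0 : ℝ))).fun_pow m)).congr_deriv ?_
  rcases m with _ | _ | m <;> simp

lemma hasDerivAt_binomPMF_one_sub (n k : ℕ) :
    HasDerivAt (fun q => binomPMF (n + 1) (1 - q) k)
      (if k = n then (n + 1 : ℝ) else if k = n + 1 then -(n + 1 : ℝ) else 0) 0 := by
  simp_rw [binomPMF, sub_sub_cancel, mul_assoc]
  refine ((hasDerivAt_one_sub_pow_mul_pow k (n + 1 - k)).const_mul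
    ((n + 1).choose k : ℝ)).congr_deriv ?_
  rcases lt_trichotomy k n with hk | rfl | hk
  · simp [hk.ne, show n + 1 - k ≠ 0 by omega, show n + 1 - k ≠ 1 by omega,
      show k ≠ n + 1 by omega]
  · simp
  · rcases Nat.lt_or_ge (n + 1) k with hk' | hk'
    · simp [Nat.choose_eq_zero_of_lt hk', show k ≠ n by omega, show k ≠ n + 1 by omega]
    · obtain rfl : k = n + 1 := by omega
      simp

lemma hasDerivAt_sum_binomPMF_one_sub_mul (n : ℕ) (a : ℕ → ℝ) :
    HasDerivAt (fun q => ∑ k ∈ range (n + 1 + 1), binomPMF (n + 1) (1 - q) k * a k)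
      (-((n + 1) * (a (n + 1) - a n))) 0 := by
  refine (HasDerivAt.fun_sum fun k _ =>
    (hasDerivAt_binomPMF_one_sub n k).mul_const (a k)).congr_deriv ?_
  rw [sum_range_succ, sum_range_succ, sum_eq_zero fun k hk => ?_]
  · simp only [↓reduceIte, Nat.add_eq_left, one_ne_zero]
    ring
  · have hk := mem_range.mp hk
    simp [hk.ne, show k ≠ n + 1 by omega]

noncomputable def binomMidCDF (n : ℕ) (p : ℝ) (k : ℕ) : ℝ :=
  ∑ j ∈ range k, binomPMF n p j + 1 / 2 * binomPMF n p k

lemma binomMidCDF_succ_sub (n : ℕ) (p : ℝ) (k : ℕ) :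
    binomMidCDF n p (k + 1) - binomMidCDF n p k =
      (binomPMF n p k + binomPMF n p (k + 1)) / 2 := by
  rw [binomMidCDF, binomMidCDF, sum_range_succ]
  ring

lemma G_eq_sum_binomPMF_mul_binomMidCDF (N : ℕ) (h q : ℝ) :
    G N h q = -h * (1 - q) ^ N + (1 - h) *
      (∑ k ∈ range (N + 1), binomPMF N (1 - q) k * binomMidCDF N (1 / 2) k
        - ((2 : ℝ) ^ N)⁻¹ / 2) := by
  have hC := sum_mul_sum_Ioc_add_half_mul_eq_sq_div_two (fun k => binomPMF N (1 - q) k) N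
  rw [sum_binomPMF] at hC
  simp only [G, binomMidCDF, mul_sub, sum_sub_distrib, mul_left_comm _ ((2 : ℝ) ^ N)⁻¹,
    ← mul_sum, hC]
  ring

lemma div_add_lt_iff_pos_sub {n m c h : ℝ} (hn : 0 < n) (hm : 0 ≤ m) (hc : 0 < c) :
    m / (c + m) < h ↔ 0 < h * n - (1 - h) * n * m * c⁻¹ := by
  have hfactor : h * n - (1 - h) * n * m * c⁻¹ = n * c⁻¹ * (h * (c + m) - m) := by
    field_simp
    ring
  rw [div_lt_iff₀ (by positivity), hfactor, mul_pos_iff_of_pos_left (by positivity), sub_pos]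

lemma hasDerivAt_G_zero {N : ℕ} (hN : N ≠ 0) (h : ℝ) :
    HasDerivAt (G N h) (h * N - (1 - h) * N * (N + 1) * ((2 : ℝ) ^ (N + 1))⁻¹) 0 := by
  obtain ⟨n, rfl⟩ : ∃ n, N = n + 1 := ⟨N - 1, by omega⟩
  have hPow : HasDerivAt (fun q : ℝ => (1 - q) ^ (n + 1)) (-(n + 1)) 0 := by
    simpa using ((hasDerivAt_id' (x := (0 : ℝ))).const_sub 1).fun_pow (n + 1)
  have hSum := hasDerivAt_sum_binomPMF_one_sub_mul n (binomMidCDF (n + 1) (1 / 2))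
  rw [binomMidCDF_succ_sub, binomPMF_half, binomPMF_half, Nat.choose_succ_self_right,
    Nat.choose_self] at hSum
  rw [show G (n + 1) h = _ from funext (G_eq_sum_binomPMF_mul_binomMidCDF (n + 1) h)]
  refine ((hPow.const_mul (-h)).add ((hSum.sub_const _).const_mul (1 - h))).congr_deriv ?_
  push_cast
  field_simp
  ring

theorem stmt_12_general (N : ℕ) (hN : 2 ≤ N) (h : ℝ) :
    HasDerivAt (G N h)
      (h * N - (1-h) * N * (N+1) * ((2:ℝ)^(N+1))⁻¹) 0 ∧
    (0 < h * N - (1-h) * N * (N+1) * ((2:ℝ)^(N+1))⁻¹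
      ↔ (N+1) / ((2:ℝ)^(N+1) + N + 1) < h) := by
  refine ⟨hasDerivAt_G_zero (by omega) h, ?_⟩
  rw [add_assoc _ (N : ℝ)]
  exact (div_add_lt_iff_pos_sub (Nat.cast_pos.mpr (by omega)) (by positivity) (by positivity)).symm

/-- G'(0) = hN - (1-h)N(N+1)2^{-(N+1)}, and G'(0) > 0 iff
h > (N+1)/(2^{N+1}+N+1). -/
theorem stmt_12 (N : ℕ) (hN : 2 ≤ N) (h : ℝ) (hh : h ∈ Set.Ioo (0:ℝ) 1) :
    HasDerivAt (G N h)
      (h * N - (1-h) * N * (N+1) * ((2:ℝ)^(N+1))⁻¹) 0 ∧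
    (0 < h * N - (1-h) * N * (N+1) * ((2:ℝ)^(N+1))⁻¹
      ↔ (N+1) / ((2:ℝ)^(N+1) + N + 1) < h) :=
  stmt_12_general N hN h
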